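/- Let R be a finite digraph. Then for every finite digraph S: R ⊑_Γ S with respect to the class of all finite digraphs if and only if #S(G,R) ≤ #S(G,S) for every finite digraph G. -/

import Mathlib

/-- A homomorphism between digraphs `(V, A)` and `(W, B)`:
a map sending every arc to an arc. -/
def IsHom {V W : Type} (A : V → V → Prop) (B : W → W → Prop) (f : V → W) : Prop :=
  ∀ ⦃v w : V⦄, A v w → B (f v) (f w)

/-- A strict homomorphism: a homomorphism mapping proper arcs to proper arcs. -/
def IsStrictHom {V W : Type} (A : V → V → Prop) (B : W → W → Prop) (f : V → W) : Prop :=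
  IsHom A B f ∧ ∀ ⦃v w : V⦄, A v w → v ≠ w → f v ≠ f w

/-- Adjacency in a digraph. -/
def DAdj {V : Type} (A : V → V → Prop) (v w : V) : Prop := A v w ∨ A w v

/-- `v` and `w` are connected in `X`: `v = w` (with `v ∈ X`), or there is a line
`z 0, …, z I` inside `X` connecting them, consecutive members being adjacent. -/
def ConnIn {V : Type} (A : V → V → Prop) (X : Set V) (v w : V) : Prop :=
  ∃ (I : ℕ) (z : ℕ → V), z 0 = v ∧ z I = w ∧ (∀ i ≤ I, z i ∈ X) ∧
    ∀ i < I, DAdj A (z i) (z (i + 1))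

/-- `γ_X(v)`: the set of `w ∈ X` connected with `v` in `X`. -/
def gammaSet {V : Type} (A : V → V → Prop) (X : Set V) (v : V) : Set V :=
  {w | ConnIn A X v w}

/-- `Γ_ξ(v)`: the connectivity component of `v` in the preimage `ξ⁻¹(ξ(v))`. -/
def GammaComp {V W : Type} (A : V → V → Prop) (ξ : V → W) (v : V) : Set V :=
  gammaSet A {u | ξ u = ξ v} v

/-- The set of homomorphisms `H(G,H)` (as a type). -/
def HomSet {V W : Type} (A : V → V → Prop) (B : W → W → Prop) : Type :=
  {f : V → W // IsHom A B f}

/-- The set of strict homomorphisms `S(G,H)` (as a type). -/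
def StrictHomSet {V W : Type} (A : V → V → Prop) (B : W → W → Prop) : Type :=
  {f : V → W // IsStrictHom A B f}

/-- The vertex set of the digraph `G_ξ`: the components `Γ_ξ(v)`, `v ∈ V(G)`. -/
def GVert {V W : Type} (A : V → V → Prop) (ξ : V → W) : Type :=
  {C : Set V // ∃ v, C = GammaComp A ξ v}

/-- The arc relation of the digraph `G_ξ`. -/
def GArc {V W : Type} (A : V → V → Prop) (ξ : V → W) :
    GVert A ξ → GVert A ξ → Prop :=
  fun C D => ∃ a ∈ C.1, ∃ b ∈ D.1, A a b

/-- The canonical map `π_ξ : G → G_ξ`, `v ↦ Γ_ξ(v)`. -/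
def piMap {V W : Type} (A : V → V → Prop) (ξ : V → W) (v : V) : GVert A ξ :=
  ⟨GammaComp A ξ v, v, rfl⟩

/-- `Θ_{G,H'}(ξ)`: the homomorphisms `ζ : G → H'` with `G_ζ = G_ξ`
(equality of the digraphs `G_ζ` and `G_ξ`, i.e. of their vertex sets,
which determines the arc sets). -/
def ThetaSet {V W W' : Type} (A : V → V → Prop) (B' : W' → W' → Prop)
    (ξ : V → W) : Set (V → W') :=
  {ζ | IsHom A B' ζ ∧
    {C : Set V | ∃ v, C = GammaComp A ζ v} = {C : Set V | ∃ v, C = GammaComp A ξ v}}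

/-- `R ⊑_Γ S` with respect to a class `D'` of finite digraphs: a strong Γ-scheme
from `R` to `S` exists, i.e. for every finite digraph `G ∈ D'` an injective map
`ρ_G : H(G,R) → H(G,S)` with `Γ_{ρ_G(ξ)}(v) = Γ_ξ(v)` for all `ξ`, `v`. -/
def SqGamma (D' : (V : Type) → (V → V → Prop) → Prop)
    {VR VS : Type} (R : VR → VR → Prop) (S : VS → VS → Prop) : Prop :=
  ∀ (V : Type) [Finite V] [Nonempty V] (A : V → V → Prop), D' V A →
    ∃ ρ : HomSet A R → HomSet A S, Function.Injective ρ ∧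
      ∀ (ξ : HomSet A R) (v : V), GammaComp A (ρ ξ).1 v = GammaComp A ξ.1 v

/-- The class `T_a`: digraphs whose loop-removed digraph is acyclic,
i.e. every closed walk is trivial. -/
def Ta {V : Type} (A : V → V → Prop) : Prop :=
  ∀ (z : ℕ → V) (I : ℕ), 0 < I →
    (∀ i < I, A (z i) (z (i + 1)) ∧ z i ≠ z (i + 1)) → z 0 ≠ z I

/-- A poset: a reflexive, antisymmetric, transitive digraph. -/
def IsPosetRel {V : Type} (A : V → V → Prop) : Prop :=
  Reflexive A ∧ AntiSymmetric A ∧ Transitive A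

/-- An element of `P^*`: an irreflexive, antisymmetric, transitive digraph. -/
def IsStrictPosetRel {V : Type} (A : V → V → Prop) : Prop :=
  Irreflexive A ∧ AntiSymmetric A ∧ Transitive A

/-- The direct (disjoint) sum of two digraphs. -/
def sumRel {V W : Type} (A : V → V → Prop) (B : W → W → Prop) :
    V ⊕ W → V ⊕ W → Prop
  | Sum.inl v, Sum.inl w => A v w
  | Sum.inr v, Sum.inr w => B v w
  | _, _ => False

/-- The open neighborhood `N(v)`. -/
def Nbr {Z : Type} (A : Z → Z → Prop) (v : Z) : Set Z :=
  {w | w ≠ v ∧ (A v w ∨ A w v)}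

/-- The in-neighborhood `N^in(v)`. -/
def NIn {Z : Type} (A : Z → Z → Prop) (v : Z) : Set Z :=
  {w | w ≠ v ∧ A w v}

/-- The out-neighborhood `N^out(v)`. -/
def NOut {Z : Type} (A : Z → Z → Prop) (v : Z) : Set Z :=
  {w | w ≠ v ∧ A v w}

/-- `A_r`: the arcs of `R` minus all arcs between `M` and `X`. -/
def ArRel {Z : Type} (A : Z → Z → Prop) (X M : Set Z) : Z → Z → Prop :=
  fun v w => A v w ∧ ¬(v ∈ M ∧ w ∈ X) ∧ ¬(v ∈ X ∧ w ∈ M)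

/-- `A_d = { m β(x) : m x ∈ A(R) ∩ (M × X) }`. -/
def AdRel {Z : Type} (A : Z → Z → Prop) (X M : Set Z) (β : Z → Z) : Z → Z → Prop :=
  fun v w => v ∈ M ∧ ∃ x ∈ X, A v x ∧ w = β x

/-- `A_u = { β(x) m : x m ∈ A(R) ∩ (X × M) }`. -/
def AuRel {Z : Type} (A : Z → Z → Prop) (X M : Set Z) (β : Z → Z) : Z → Z → Prop :=
  fun v w => w ∈ M ∧ ∃ x ∈ X, A x w ∧ v = β x

/-- The rearranged digraph `S`, with `A(S) = A_r ∪ A_d ∪ A_u`. -/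
def SRel {Z : Type} (A : Z → Z → Prop) (X M : Set Z) (β : Z → Z) : Z → Z → Prop :=
  fun v w => ArRel A X M v w ∨ AdRel A X M β v w ∨ AuRel A X M β v w

/-- `U_ξ = { v : ξ(v) ∈ T and ξ[N_G(v)] ∩ M ≠ ∅ }` (for `T = X`; with `T = Y`
this gives `U'_ζ`). -/
def USet {V Z : Type} (AG : V → V → Prop) (T M : Set Z) (ξ : V → Z) : Set V :=
  {v | ξ v ∈ T ∧ ∃ w ∈ Nbr AG v, ξ w ∈ M}

open Classical in
/-- The rearranged homomorphism `ρ_G(ξ)`: `β(ξ(v))` on `U_ξ` and `ξ(v)` elsewhere. -/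
noncomputable def rhoMap {V Z : Type} (AG : V → V → Prop) (X M : Set Z) (β : Z → Z)
    (ξ : V → Z) : V → Z :=
  fun v => if v ∈ USet AG X M ξ then β (ξ v) else ξ v

/-!
`R ⊑_Γ S` forces the count inequality because a Γ-preserving map sends a strict homomorphism
`ξ` (all of whose components `Γ_ξ(v)` are singletons) to a strict homomorphism. Conversely, a
homomorphism `ξ : G → R` is the same thing as its set of components `𝒞` together with the
strict homomorphism `ξ̄ : G/𝒞 → R` it induces on the quotient digraph. Fixing, for every
partition `𝒞`, an injection `S(G/𝒞, R) ↪ S(G/𝒞, S)` and composing its value at `ξ̄` with the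
quotient map gives a homomorphism `G → S` whose components are again `𝒞`, because the
quotient map of a strict homomorphism collapses exactly the components. The components and
`ξ̄` are recovered from the image, so this is a strong Γ-scheme.
-/

section Components

variable {V W W' : Type} {A : V → V → Prop}

def FiberAdj (A : V → V → Prop) (ξ : V → W) (a b : V) : Prop := ξ a = ξ b ∧ DAdj A a b

instance (ξ : V → W) : Std.Symm (FiberAdj A ξ) := ⟨fun _ _ h => ⟨h.1.symm, h.2.symm⟩⟩

theorem mem_gammaComp_iff {ξ : V → W} {v w : V} :
    w ∈ GammaComp A ξ v ↔ Relation.ReflTransGen (FiberAdj A ξ) v w := by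
  constructor
  · rintro ⟨I, z, rfl, rfl, hfib, hadj⟩
    have reach : ∀ J ≤ I, Relation.ReflTransGen (FiberAdj A ξ) (z 0) (z J) := by
      intro J
      induction J with
      | zero => exact fun _ => .refl
      | succ J ih =>
        intro hJ
        exact (ih (J.le_succ.trans hJ)).tail
          ⟨(hfib J (by omega)).trans (hfib (J + 1) hJ).symm, hadj J hJ⟩
    exact reach I le_rfl
  · intro h
    induction h with
    | refl => exact ⟨0, fun _ => v, rfl, rfl, fun _ _ => rfl, fun _ h => absurd h (by omega)⟩
    | @tail b c _ hbc ih =>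
      obtain ⟨I, z, hz0, hzI, hfib, hadj⟩ := ih
      refine ⟨I + 1, fun i => if i ≤ I then z i else c, by simp [hz0], by simp, ?_, ?_⟩
      · intro i hi
        by_cases h : i ≤ I
        · simpa [h] using hfib i h
        · simpa [h, ← hbc.1, ← hzI] using hfib I le_rfl
      · intro i hi
        by_cases h : i < I
        · simpa [h.le, show i + 1 ≤ I from h] using hadj i h
        · obtain rfl : i = I := by omega
          simpa [hzI] using hbc.2

theorem mem_gammaComp_self (ξ : V → W) (v : V) : v ∈ GammaComp A ξ v :=
  mem_gammaComp_iff.2 .refl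

theorem mem_gammaComp_of_fiberAdj {ξ : V → W} {v w : V} (h : FiberAdj A ξ v w) :
    w ∈ GammaComp A ξ v :=
  mem_gammaComp_iff.2 (.single h)

theorem apply_eq_of_mem_gammaComp {ξ : V → W} {v w : V} (h : w ∈ GammaComp A ξ v) :
    ξ v = ξ w := by
  replace h := mem_gammaComp_iff.1 h
  induction h with
  | refl => rfl
  | tail _ hbc ih => exact ih.trans hbc.1

theorem gammaComp_eq_of_mem {ξ : V → W} {v w : V} (h : w ∈ GammaComp A ξ v) :
    GammaComp A ξ w = GammaComp A ξ v := by
  have hvw := mem_gammaComp_iff.1 h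
  ext u
  simp only [mem_gammaComp_iff]
  exact ⟨hvw.trans, (Std.Symm.symm _ _ hvw).trans⟩

theorem gammaComp_subset_of_adj {ξ : V → W} {ζ : V → W'}
    (h : ∀ u w, DAdj A u w → ξ u = ξ w → ζ u = ζ w) (v : V) :
    GammaComp A ξ v ⊆ GammaComp A ζ v := fun _ hw =>
  mem_gammaComp_iff.2 <| Relation.ReflTransGen.mono (fun a b hab => ⟨h a b hab.2 hab.1, hab.2⟩)
    _ _ (mem_gammaComp_iff.1 hw)

theorem isStrictHom_iff_gammaComp_eq_singleton {B : W → W → Prop} {ξ : V → W}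
    (hξ : IsHom A B ξ) : IsStrictHom A B ξ ↔ ∀ v, GammaComp A ξ v = {v} := by
  constructor
  · intro hstrict v
    refine Set.eq_singleton_iff_unique_mem.2 ⟨mem_gammaComp_self ξ v, fun w hw => ?_⟩
    have collapse : ∀ u w, DAdj A u w → ξ u = ξ w → id u = id w := by
      rintro u w (huw | hwu) heq <;> by_contra hne
      · exact hstrict.2 huw hne heq
      · exact hstrict.2 hwu (Ne.symm hne) heq.symm
    exact (apply_eq_of_mem_gammaComp (gammaComp_subset_of_adj collapse v hw)).symm
  · refine fun h => ⟨hξ, fun v w hvw hne heq => hne ?_⟩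
    have hw := mem_gammaComp_of_fiberAdj (A := A) ⟨heq, Or.inl hvw⟩
    rw [h v] at hw
    exact hw.symm

end Components

section Quotient

variable {V W W' : Type} {A : V → V → Prop}

/-- For `𝒞` the components of `ξ` this is the paper's `G_ξ`. It is indexed by `𝒞` rather than
by `ξ`, so that homomorphisms with the same components have literally the same quotient. -/
def quotArc (A : V → V → Prop) (𝒞 : Set (Set V)) (C D : 𝒞) : Prop :=
  ∃ a ∈ C.1, ∃ b ∈ D.1, A a b

noncomputable def quotMap [Nonempty V] (ξ : V → W) (C : Set V) : W :=
  ξ (Classical.epsilon (· ∈ C))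

theorem quotMap_gammaComp [Nonempty V] (ξ : V → W) (v : V) :
    quotMap ξ (GammaComp A ξ v) = ξ v :=
  (apply_eq_of_mem_gammaComp (Classical.epsilon_spec ⟨v, mem_gammaComp_self ξ v⟩)).symm

theorem isStrictHom_quotMap [Nonempty V] {B : W → W → Prop} {ξ : V → W} (hξ : IsHom A B ξ) :
    IsStrictHom (quotArc A (Set.range (GammaComp A ξ))) B (fun C => quotMap ξ C.1) := by
  constructor
  · rintro ⟨_, c, rfl⟩ ⟨_, d, rfl⟩ ⟨a, ha, b, hb, hab⟩
    simpa only [← gammaComp_eq_of_mem ha, ← gammaComp_eq_of_mem hb, quotMap_gammaComp]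
      using hξ hab
  · rintro ⟨_, c, rfl⟩ ⟨_, d, rfl⟩ ⟨a, ha, b, hb, hab⟩ hne heq
    simp only [← gammaComp_eq_of_mem ha, ← gammaComp_eq_of_mem hb, quotMap_gammaComp] at heq hne
    exact hne (Subtype.ext
      (gammaComp_eq_of_mem (mem_gammaComp_of_fiberAdj (A := A) ⟨heq, Or.inl hab⟩)).symm)

theorem gammaComp_comp_rangeFactorization {B : W' → W' → Prop} {ξ : V → W}
    {ζ : Set.range (GammaComp A ξ) → W'}
    (hζ : IsStrictHom (quotArc A (Set.range (GammaComp A ξ))) B ζ) :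
    GammaComp A (ζ ∘ Set.rangeFactorization (GammaComp A ξ)) = GammaComp A ξ := by
  funext v
  refine (gammaComp_subset_of_adj (fun u w huw heq => ?_) v).antisymm
    (gammaComp_subset_of_adj (fun u w huw heq => ?_) v)
  · have hπ : Set.rangeFactorization (GammaComp A ξ) u = Set.rangeFactorization _ w := by
      by_contra hne
      rcases huw with huw | hwu
      · exact hζ.2 ⟨u, mem_gammaComp_self ξ u, w, mem_gammaComp_self ξ w, huw⟩ hne heq
      · exact hζ.2 ⟨w, mem_gammaComp_self ξ w, u, mem_gammaComp_self ξ u, hwu⟩ (Ne.symm hne)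
          heq.symm
    have hΓ : GammaComp A ξ u = GammaComp A ξ w := congrArg Subtype.val hπ
    exact apply_eq_of_mem_gammaComp (hΓ ▸ mem_gammaComp_self ξ w)
  · exact congrArg ζ (Subtype.ext
      (gammaComp_eq_of_mem (mem_gammaComp_of_fiberAdj (A := A) ⟨heq, huw⟩)).symm)

end Quotient

section Transfer

variable {W VR VS : Type} {B : W → W → Prop} {R : VR → VR → Prop} {S : VS → VS → Prop}

instance [Finite W] [Finite VR] : Finite (StrictHomSet B R) := Subtype.finite

theorem nonempty_strictHomSet_embedding [Finite VR] [Finite VS]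
    (hcard : ∀ (V : Type) [Finite V] [Nonempty V] (A : V → V → Prop),
      Nat.card (StrictHomSet A R) ≤ Nat.card (StrictHomSet A S))
    (W : Type) [Finite W] (B : W → W → Prop) :
    Nonempty (StrictHomSet B R ↪ StrictHomSet B S) := by
  cases isEmpty_or_nonempty W
  · have : Subsingleton (StrictHomSet B R) := ⟨fun f g => Subtype.ext (funext isEmptyElim)⟩
    let emptyHom : StrictHomSet B S :=
      ⟨isEmptyElim, fun v => isEmptyElim v, fun v => isEmptyElim v⟩
    exact ⟨⟨fun _ => emptyHom, fun _ _ _ => Subsingleton.elim _ _⟩⟩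
  · have := Fintype.ofFinite (StrictHomSet B R)
    have := Fintype.ofFinite (StrictHomSet B S)
    exact Function.Embedding.nonempty_of_card_le
      (by simpa only [Nat.card_eq_fintype_card] using hcard W B)

open Classical in
/-- Extended by a junk value off `S(G,R)`, so that it can be applied without carrying a proof of
strictness. -/
noncomputable def embedStrictHom [Nonempty VS] (e : StrictHomSet B R ↪ StrictHomSet B S)
    (f : W → VR) : W → VS :=
  if h : IsStrictHom B R f then (e ⟨f, h⟩).1 else fun _ => Classical.arbitrary VS

theorem isStrictHom_embedStrictHom [Nonempty VS] (e : StrictHomSet B R ↪ StrictHomSet B S)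
    {f : W → VR} (hf : IsStrictHom B R f) : IsStrictHom B S (embedStrictHom e f) := by
  rw [embedStrictHom, dif_pos hf]
  exact (e ⟨f, hf⟩).2

theorem eq_of_embedStrictHom_eq [Nonempty VS] (e : StrictHomSet B R ↪ StrictHomSet B S)
    {f g : W → VR} (hf : IsStrictHom B R f) (hg : IsStrictHom B R g)
    (h : embedStrictHom e f = embedStrictHom e g) : f = g := by
  rw [embedStrictHom, embedStrictHom, dif_pos hf, dif_pos hg] at h
  exact congrArg Subtype.val (e.injective (Subtype.ext h))

end Transfer

section Scheme

variable {V VR VS : Type} [Nonempty V] [Nonempty VS] {A : V → V → Prop}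
  {R : VR → VR → Prop} {S : VS → VS → Prop}
  (e : ∀ 𝒞 : Set (Set V), StrictHomSet (quotArc A 𝒞) R ↪ StrictHomSet (quotArc A 𝒞) S)

noncomputable def gammaScheme (ξ : V → VR) : V → VS :=
  embedStrictHom (e (Set.range (GammaComp A ξ))) (fun C => quotMap ξ C.1) ∘
    Set.rangeFactorization (GammaComp A ξ)

theorem isHom_gammaScheme {ξ : V → VR} (hξ : IsHom A R ξ) : IsHom A S (gammaScheme e ξ) :=
  fun v w hvw => (isStrictHom_embedStrictHom _ (isStrictHom_quotMap hξ)).1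
    ⟨v, mem_gammaComp_self ξ v, w, mem_gammaComp_self ξ w, hvw⟩

theorem gammaComp_gammaScheme {ξ : V → VR} (hξ : IsHom A R ξ) :
    GammaComp A (gammaScheme e ξ) = GammaComp A ξ :=
  gammaComp_comp_rangeFactorization (isStrictHom_embedStrictHom _ (isStrictHom_quotMap hξ))

theorem eq_of_gammaScheme_eq {ξ₁ ξ₂ : V → VR} (h₁ : IsHom A R ξ₁) (h₂ : IsHom A R ξ₂)
    (h : gammaScheme e ξ₁ = gammaScheme e ξ₂) : ξ₁ = ξ₂ := by
  have hΓ : GammaComp A ξ₁ = GammaComp A ξ₂ := by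
    rw [← gammaComp_gammaScheme e h₁, h, gammaComp_gammaScheme e h₂]
  have hq₁ := isStrictHom_quotMap (B := R) h₁
  unfold gammaScheme at h
  rw [hΓ] at h hq₁
  have hbar := eq_of_embedStrictHom_eq _ hq₁ (isStrictHom_quotMap h₂)
    (Set.rangeFactorization_surjective.injective_comp_right h)
  funext v
  calc ξ₁ v = quotMap ξ₁ (GammaComp A ξ₁ v) := (quotMap_gammaComp ξ₁ v).symm
    _ = quotMap ξ₁ (GammaComp A ξ₂ v) := by rw [hΓ]
    _ = quotMap ξ₂ (GammaComp A ξ₂ v) := congrFun hbar (Set.rangeFactorization _ v)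
    _ = ξ₂ v := quotMap_gammaComp ξ₂ v

end Scheme

section Main

variable {VR VS : Type} {R : VR → VR → Prop} {S : VS → VS → Prop}

theorem card_strictHomSet_le_of_sqGamma [Finite VS] (h : SqGamma (fun _ _ => True) R S)
    (V : Type) [Finite V] [Nonempty V] (A : V → V → Prop) :
    Nat.card (StrictHomSet A R) ≤ Nat.card (StrictHomSet A S) := by
  obtain ⟨ρ, hρ, hρΓ⟩ := h V A trivial
  have hstrict (ξ : StrictHomSet A R) : IsStrictHom A S (ρ ⟨ξ.1, ξ.2.1⟩).1 :=
    (isStrictHom_iff_gammaComp_eq_singleton (ρ _).2).2 fun v =>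
      (hρΓ _ v).trans ((isStrictHom_iff_gammaComp_eq_singleton ξ.2.1).1 ξ.2 v)
  refine Nat.card_le_card_of_injective (fun ξ => ⟨_, hstrict ξ⟩) fun ξ₁ ξ₂ h => ?_
  have hval : (ρ ⟨ξ₁.1, ξ₁.2.1⟩).1 = (ρ ⟨ξ₂.1, ξ₂.2.1⟩).1 :=
    congrArg (fun f : StrictHomSet A S => f.1) h
  exact Subtype.ext (congrArg (fun f : HomSet A R => f.1) (hρ (Subtype.ext hval)))

theorem sqGamma_of_card_strictHomSet_le [Finite VR] [Finite VS] [Nonempty VS]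
    (hcard : ∀ (V : Type) [Finite V] [Nonempty V] (A : V → V → Prop),
      Nat.card (StrictHomSet A R) ≤ Nat.card (StrictHomSet A S)) :
    SqGamma (fun _ _ => True) R S := by
  intro V _ _ A _
  let e (𝒞 : Set (Set V)) := (nonempty_strictHomSet_embedding hcard 𝒞 (quotArc A 𝒞)).some
  exact ⟨fun ξ => ⟨gammaScheme e ξ.1, isHom_gammaScheme e ξ.2⟩,
    fun ξ₁ ξ₂ h => Subtype.ext (eq_of_gammaScheme_eq e ξ₁.2 ξ₂.2 (congrArg Subtype.val h)),
    fun ξ v => congrFun (gammaComp_gammaScheme e ξ.2) v⟩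

end Main

theorem stmt9_general {VR : Type} [Finite VR] (R : VR → VR → Prop)
    {VS : Type} [Finite VS] [Nonempty VS] (S : VS → VS → Prop) :
    SqGamma (fun _ _ => True) R S ↔
      ∀ (V : Type) [Finite V] [Nonempty V] (A : V → V → Prop),
        Nat.card (StrictHomSet A R) ≤ Nat.card (StrictHomSet A S) :=
  ⟨card_strictHomSet_le_of_sqGamma, sqGamma_of_card_strictHomSet_le⟩

/-- For finite digraphs `R`, `S`: `R ⊑_Γ S` with respect to the class of all
finite digraphs iff `#S(G,R) ≤ #S(G,S)` for every finite digraph `G`. -/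
theorem stmt9 {VR : Type} [Finite VR] [Nonempty VR] (R : VR → VR → Prop)
    {VS : Type} [Finite VS] [Nonempty VS] (S : VS → VS → Prop) :
    SqGamma (fun _ _ => True) R S ↔
      ∀ (V : Type) [Finite V] [Nonempty V] (A : V → V → Prop),
        Nat.card (StrictHomSet A R) ≤ Nat.card (StrictHomSet A S) :=
  stmt9_general R S
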